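/- Let G be a Garside group of finite type and x, α ∈ G with inf(x^α) = inf(x) and sup(x^α) = sup(x), and let α^{(1)} be the transport of α at x. Then inf(α^{(1)}) ≥ inf(α) and sup(α^{(1)}) ≤ sup(α), hence ℓ(α^{(1)}) ≤ ℓ(α). In particular, if α is simple then so is α^{(1)}. -/

import Mathlib

namespace GarsidePaper

/-- A Garside structure of finite type on a group `G`: a positive submonoid `P` with
`P ∩ P⁻¹ = {1}`, a Garside element `Δ ∈ P`, the prefix order `a ≼ b ↔ a⁻¹b ∈ P`
a lattice order (with meet `wedge` and join `vee`), the simple elements `[1,Δ]`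
generating `G` and being finite, `Δ⁻¹PΔ = P`, a finite norm on positive elements,
and the infimum and supremum functions `inf`, `sup` characterised by
`Δ^(inf x) ≼ x ≼ Δ^(sup x)` with `inf x` maximal and `sup x` minimal. -/
structure Garside (G : Type*) [Group G] where
  P : Submonoid G
  Δ : G
  purity : ∀ a : G, a ∈ P → a⁻¹ ∈ P → a = 1
  delta_mem : Δ ∈ P
  wedge : G → G → G
  vee : G → G → G
  wedge_le_left : ∀ a b : G, (wedge a b)⁻¹ * a ∈ P
  wedge_le_right : ∀ a b : G, (wedge a b)⁻¹ * b ∈ P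
  le_wedge : ∀ a b c : G, c⁻¹ * a ∈ P → c⁻¹ * b ∈ P → c⁻¹ * wedge a b ∈ P
  le_vee_left : ∀ a b : G, a⁻¹ * vee a b ∈ P
  le_vee_right : ∀ a b : G, b⁻¹ * vee a b ∈ P
  vee_le : ∀ a b c : G, a⁻¹ * c ∈ P → b⁻¹ * c ∈ P → (vee a b)⁻¹ * c ∈ P
  simples_generate : Subgroup.closure {a : G | a ∈ P ∧ a⁻¹ * Δ ∈ P} = (⊤ : Subgroup G)
  conj_pos : ∀ a : G, a ∈ P → Δ⁻¹ * a * Δ ∈ P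
  norm : G → ℕ
  norm_exists : ∀ x : G, x ∈ P → x ≠ 1 →
    ∃ l : List G, (∀ s ∈ l, s ∈ P ∧ s ≠ 1) ∧ l.prod = x ∧ l.length = norm x
  norm_max : ∀ x : G, x ∈ P → x ≠ 1 →
    ∀ l : List G, (∀ s ∈ l, s ∈ P ∧ s ≠ 1) → l.prod = x → l.length ≤ norm x
  simples_finite : Set.Finite {a : G | a ∈ P ∧ a⁻¹ * Δ ∈ P}
  inf : G → ℤ
  sup : G → ℤ
  inf_le : ∀ x : G, (Δ ^ inf x)⁻¹ * x ∈ P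
  inf_max : ∀ (x : G) (p : ℤ), (Δ ^ p)⁻¹ * x ∈ P → p ≤ inf x
  le_sup : ∀ x : G, x⁻¹ * Δ ^ sup x ∈ P
  sup_min : ∀ (x : G) (q : ℤ), x⁻¹ * Δ ^ q ∈ P → sup x ≤ q

namespace Garside

variable {G : Type*} [Group G]

/-- The prefix order `a ≼ b`. -/
def le (S : Garside G) (a b : G) : Prop := a⁻¹ * b ∈ S.P

/-- The canonical length `ℓ(x) = sup(x) - inf(x)`. -/
def len (S : Garside G) (x : G) : ℤ := S.sup x - S.inf x

/-- The initial factor `ι(x) = (x Δ^(-inf x)) ∧ Δ`. -/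
def iota (S : Garside G) (x : G) : G := S.wedge (x * S.Δ ^ (-S.inf x)) S.Δ

/-- The preferred prefix `𝔭(x) = ι(x) ∧ ι(x⁻¹)`. -/
def pp (S : Garside G) (x : G) : G := S.wedge (S.iota x) (S.iota x⁻¹)

/-- Cyclic sliding `𝔰(x) = 𝔭(x)⁻¹ x 𝔭(x)`. -/
def sl (S : Garside G) (x : G) : G := (S.pp x)⁻¹ * x * S.pp x

/-- The final factor `φ(x) = (Δ^(sup x - 1) ∧ x)⁻¹ x`. -/
def phi (S : Garside G) (x : G) : G := (S.wedge (S.Δ ^ (S.sup x - 1)) x)⁻¹ * x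

/-- Conjugation by `Δ`: `τ(x) = Δ⁻¹ x Δ`. -/
def tau (S : Garside G) (x : G) : G := S.Δ⁻¹ * x * S.Δ

/-- Cycling `c(x) = ι(x)⁻¹ x ι(x)`. -/
def cyc (S : Garside G) (x : G) : G := (S.iota x)⁻¹ * x * S.iota x

/-- Decycling `d(x) = φ(x) x φ(x)⁻¹`. -/
def dec (S : Garside G) (x : G) : G := S.phi x * x * (S.phi x)⁻¹

/-- The transport `α^{(1)} = 𝔭(x)⁻¹ α 𝔭(x^α)` of `α` at `x`. -/
def transport (S : Garside G) (x α : G) : G := (S.pp x)⁻¹ * α * S.pp (α⁻¹ * x * α)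

/-- The iterated transport: `itTransport x i α = α^{(i)}`, the transport of `α^{(i-1)}`
at `𝔰^{i-1}(x)`, with `α^{(0)} = α`. -/
def itTransport (S : Garside G) (x : G) : ℕ → G → G
  | 0, α => α
  | i + 1, α => S.transport ((S.sl)^[i] x) (S.itTransport x i α)

/-- `𝔓_i(x) = 𝔭(x) 𝔭(𝔰(x)) ⋯ 𝔭(𝔰^{i-1}(x))`, with `𝔓₀(x) = 1`. -/
def PP (S : Garside G) (x : G) : ℕ → G
  | 0 => 1
  | i + 1 => S.PP x i * S.pp ((S.sl)^[i] x)

/-- The summit set `SS(x)`. -/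
def SS (S : Garside G) (x : G) : Set G :=
  {y | IsConj x y ∧ ∀ z : G, IsConj x z → S.inf z ≤ S.inf y}

/-- The super summit set `SSS(x)`. -/
def SSS (S : Garside G) (x : G) : Set G :=
  {y | IsConj x y ∧ (∀ z : G, IsConj x z → S.inf z ≤ S.inf y) ∧
       (∀ z : G, IsConj x z → S.sup y ≤ S.sup z)}

/-- The ultra summit set `USS(x)`. -/
def USS (S : Garside G) (x : G) : Set G :=
  {y | y ∈ S.SSS x ∧ ∃ m : ℕ, 1 ≤ m ∧ (S.cyc)^[m] y = y}

/-- The reduced super summit set `RSSS(x)`. -/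
def RSSS (S : Garside G) (x : G) : Set G :=
  {y | IsConj x y ∧ (∃ m : ℕ, 1 ≤ m ∧ (S.cyc)^[m] y = y) ∧
       (∃ n : ℕ, 1 ≤ n ∧ (S.dec)^[n] y = y)}

/-- The set of sliding circuits `SC(x)`. -/
def SC (S : Garside G) (x : G) : Set G :=
  {y | IsConj x y ∧ ∃ m : ℕ, 1 ≤ m ∧ (S.sl)^[m] y = y}

end Garside

/-! For a positive conjugator `γ` that preserves `inf` and `sup` of `x`, the initial factors of
`x` and `x⁻¹` are prefixes of `γ` times those of `x^γ`; taking meets, `𝔭(x) ≼ γ 𝔭(x^γ)`, i.e. the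
transport of a positive element is positive. The transport is multiplicative,
`(αβ)^{(1)} = α^{(1)} β^{(1)}` (with `β` transported at `x^α`), and fixes every power of `Δ`.
Writing `α = Δ^{inf α} γ` and `Δ^{sup α} = α γ'` with `γ, γ'` positive therefore gives
`Δ^{inf α} ≼ α^{(1)} ≼ Δ^{sup α}`. -/

namespace Garside

variable {G : Type*} [Group G] (S : Garside G)

lemma mem_P_of_eq {a b : G} (h : a = b) (hb : b ∈ S.P) : a ∈ S.P := h ▸ hb

lemma le_trans {a b c : G} (hab : S.le a b) (hbc : S.le b c) : S.le a c :=
  S.mem_P_of_eq (by group) (S.P.mul_mem hab hbc)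

lemma le_antisymm {a b : G} (hab : S.le a b) (hba : S.le b a) : a = b :=
  inv_mul_eq_one.1 (S.purity _ hab (S.mem_P_of_eq (by group) hba))

lemma mul_le_mul_left_iff (c : G) {a b : G} : S.le (c * a) (c * b) ↔ S.le a b := by
  simp [le, mul_assoc]

lemma zpow_delta_mem_P {k : ℤ} (hk : 0 ≤ k) : S.Δ ^ k ∈ S.P := by
  lift k to ℕ using hk
  simpa using pow_mem S.delta_mem k

lemma zpow_delta_le_zpow_delta {j k : ℤ} (h : j ≤ k) : S.le (S.Δ ^ j) (S.Δ ^ k) :=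
  S.mem_P_of_eq (by group) (S.zpow_delta_mem_P (sub_nonneg.2 h))

lemma one_le_and_le_delta_iff (a : G) :
    S.le 1 a ∧ S.le a S.Δ ↔ 0 ≤ S.inf a ∧ S.sup a ≤ 1 := by
  constructor
  · rintro ⟨h1a, haΔ⟩
    exact ⟨S.inf_max a 0 (by simpa [le] using h1a), S.sup_min a 1 (by simpa [le] using haΔ)⟩
  · rintro ⟨hinf, hsup⟩
    refine ⟨S.le_trans ?_ (S.inf_le a), S.le_trans (S.le_sup a) ?_⟩
    · simpa using S.zpow_delta_le_zpow_delta hinf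
    · simpa using S.zpow_delta_le_zpow_delta hsup

lemma wedge_mono {a a' b b' : G} (ha : S.le a a') (hb : S.le b b') :
    S.le (S.wedge a b) (S.wedge a' b') :=
  S.le_wedge _ _ _ (S.le_trans (S.wedge_le_left a b) ha) (S.le_trans (S.wedge_le_right a b) hb)

lemma map_wedge {f : G → G} (hf : Function.Surjective f) (hle : ∀ a b, S.le (f a) (f b) ↔ S.le a b)
    (a b : G) : f (S.wedge a b) = S.wedge (f a) (f b) := by
  refine S.le_antisymm (S.le_wedge _ _ _ ((hle _ _).2 (S.wedge_le_left a b))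
    ((hle _ _).2 (S.wedge_le_right a b))) ?_
  obtain ⟨c, hc⟩ := hf (S.wedge (f a) (f b))
  have hca : S.le c a := (hle _ _).1 (by rw [hc]; exact S.wedge_le_left _ _)
  have hcb : S.le c b := (hle _ _).1 (by rw [hc]; exact S.wedge_le_right _ _)
  rw [← hc]
  exact (hle _ _).2 (S.le_wedge _ _ _ hca hcb)

lemma mul_wedge (c a b : G) : c * S.wedge a b = S.wedge (c * a) (c * b) :=
  S.map_wedge (mul_left_surjective c) (fun _ _ => S.mul_le_mul_left_iff c) a b

def simples : Set G := {a | a ∈ S.P ∧ a⁻¹ * S.Δ ∈ S.P}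

lemma delta_mem_simples : S.Δ ∈ S.simples :=
  ⟨S.delta_mem, by simp⟩

lemma inv_mul_mem_simples {a b : G} (ha : a ∈ S.P) (hb : b ∈ S.simples) (hab : S.le a b) :
    a⁻¹ * b ∈ S.simples :=
  ⟨hab, S.mem_P_of_eq (by group) (S.P.mul_mem hb.2 (S.conj_pos a ha))⟩

lemma tau_mem_simples {a : G} (ha : a ∈ S.simples) : S.Δ⁻¹ * a * S.Δ ∈ S.simples :=
  ⟨S.conj_pos a ha.1, S.mem_P_of_eq (by group) (S.conj_pos _ ha.2)⟩

/-- The axioms only give `Δ⁻¹ P Δ ⊆ P`; the reverse inclusion comes from here: conjugation by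
`Δ⁻¹` is injective on the finite set of simples, hence onto it. -/
lemma conj_delta_mem_simples {a : G} (ha : a ∈ S.simples) : S.Δ * a * S.Δ⁻¹ ∈ S.simples := by
  have hinj : Set.InjOn (fun b => S.Δ⁻¹ * b * S.Δ) S.simples := fun b _ c _ h => by
    simpa using h
  obtain ⟨b, hb, rfl⟩ := ((Set.Finite.injOn_iff_bijOn_of_mapsTo S.simples_finite
    fun _ hb => S.tau_mem_simples hb).1 hinj).surjOn ha
  dsimp only
  rwa [show S.Δ * (S.Δ⁻¹ * b * S.Δ) * S.Δ⁻¹ = b by group]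

def tauPow (k : ℤ) : MulAut G := MulAut.conj (S.Δ ^ k)⁻¹

lemma tauPow_apply (k : ℤ) (x : G) : S.tauPow k x = (S.Δ ^ k)⁻¹ * x * S.Δ ^ k := by
  simp only [tauPow, MulAut.conj_apply, inv_inv]

lemma tauPow_neg_tauPow (k : ℤ) (x : G) : S.tauPow (-k) (S.tauPow k x) = x := by
  rw [tauPow_apply, tauPow_apply]; group

lemma tauPow_mem_simples (k : ℤ) {a : G} (ha : a ∈ S.simples) : S.tauPow k a ∈ S.simples := by
  induction k using Int.induction_on with
  | zero => simpa [tauPow_apply] using ha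
  | succ k ih =>
    convert S.tau_mem_simples ih using 1
    simp only [tauPow_apply]; group
  | pred k ih =>
    convert S.conj_delta_mem_simples ih using 1
    simp only [tauPow_apply]; group

def simplesClosure : Submonoid G := Submonoid.closure S.simples

lemma subset_simplesClosure {a : G} (ha : a ∈ S.simples) : a ∈ S.simplesClosure :=
  Submonoid.subset_closure ha

lemma simplesClosure_le_P : S.simplesClosure ≤ S.P :=
  Submonoid.closure_le.2 fun _ ha => ha.1

lemma tauPow_mem_simplesClosure (k : ℤ) {w : G} (hw : w ∈ S.simplesClosure) :
    S.tauPow k w ∈ S.simplesClosure :=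
  (Submonoid.closure_le (S := S.simplesClosure.comap (S.tauPow k).toMonoidHom).2
    (fun _ ha => S.subset_simplesClosure (S.tauPow_mem_simples k ha))) hw

/-- A simple prefix `t` of `s w` is split off through the simple `t ∨ s`. -/
lemma inv_mul_mem_simplesClosure {w : G} (hw : w ∈ S.simplesClosure) :
    ∀ t ∈ S.simples, S.le t w → t⁻¹ * w ∈ S.simplesClosure := by
  induction hw using Submonoid.closure_induction_left with
  | one =>
    intro t ht htw
    rw [S.purity t ht.1 (by simpa [le] using htw)]
    simp
  | mul_left s hs w hw ih =>
    intro t ht htsw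
    have hs_le : S.le s (s * w) := by simpa [le] using S.simplesClosure_le_P hw
    have hu : S.vee t s ∈ S.simples :=
      ⟨S.mem_P_of_eq (by group) (S.P.mul_mem ht.1 (S.le_vee_left t s)),
        S.vee_le t s S.Δ ht.2 hs.2⟩
    have hsu := S.inv_mul_mem_simples hs.1 hu (S.le_vee_right t s)
    have htu := S.inv_mul_mem_simples ht.1 hu (S.le_vee_left t s)
    have hsu_le : S.le (s⁻¹ * S.vee t s) w :=
      S.mem_P_of_eq (by group) (S.vee_le t s _ htsw hs_le)
    have := S.simplesClosure.mul_mem (S.subset_simplesClosure htu) (ih _ hsu hsu_le)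
    convert this using 1
    group

lemma exists_mul_delta_pow_mem_simplesClosure (g : G) :
    ∃ k : ℕ, g * S.Δ ^ k ∈ S.simplesClosure := by
  have hg : g ∈ Subgroup.closure S.simples := by
    rw [simples, S.simples_generate]; exact Subgroup.mem_top g
  induction hg using Subgroup.closure_induction'' with
  | mem s hs => exact ⟨0, by simpa using S.subset_simplesClosure hs⟩
  | inv_mem s hs =>
    have hsΔ := S.subset_simplesClosure (S.inv_mul_mem_simples hs.1 S.delta_mem_simples hs.2)
    exact ⟨1, by simpa using hsΔ⟩
  | one => exact ⟨0, by simp⟩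
  | mul g h _ _ hg hh =>
    obtain ⟨k, hk⟩ := hg
    obtain ⟨m, hm⟩ := hh
    refine ⟨m + k, ?_⟩
    convert S.simplesClosure.mul_mem hk (S.tauPow_mem_simplesClosure k hm) using 1
    rw [tauPow_apply]; group

lemma mem_simplesClosure_of_mem_P {a : G} (ha : a ∈ S.P) : a ∈ S.simplesClosure := by
  obtain ⟨k, hk⟩ := S.exists_mul_delta_pow_mem_simplesClosure a
  induction k with
  | zero => simpa using hk
  | succ k ih =>
    apply ih
    have hle : S.le S.Δ (a * S.Δ ^ (k + 1)) :=
      S.mem_P_of_eq (by group) (S.P.mul_mem (S.conj_pos a ha) (pow_mem S.delta_mem k))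
    convert S.tauPow_mem_simplesClosure (-1)
      (S.inv_mul_mem_simplesClosure hk _ S.delta_mem_simples hle) using 1
    rw [tauPow_apply]; group

lemma tauPow_mem_P (k : ℤ) {a : G} (ha : a ∈ S.P) : S.tauPow k a ∈ S.P :=
  S.simplesClosure_le_P (S.tauPow_mem_simplesClosure k (S.mem_simplesClosure_of_mem_P ha))

lemma tauPow_le_tauPow_iff (k : ℤ) {a b : G} : S.le (S.tauPow k a) (S.tauPow k b) ↔ S.le a b := by
  have key : ∀ (k : ℤ) {a b : G}, S.le a b → S.le (S.tauPow k a) (S.tauPow k b) := fun k a b h => by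
    simpa only [le, ← map_inv, ← map_mul] using S.tauPow_mem_P k h
  refine ⟨fun h => ?_, key k⟩
  simpa only [tauPow_neg_tauPow] using key (-k) h

lemma tauPow_wedge (k : ℤ) (a b : G) :
    S.tauPow k (S.wedge a b) = S.wedge (S.tauPow k a) (S.tauPow k b) :=
  S.map_wedge (S.tauPow k).surjective (fun _ _ => S.tauPow_le_tauPow_iff k) a b

lemma tauPow_zpow_delta (k m : ℤ) : S.tauPow k (S.Δ ^ m) = S.Δ ^ m := by
  rw [tauPow_apply]; group

lemma tauPow_delta (k : ℤ) : S.tauPow k S.Δ = S.Δ := by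
  simpa using S.tauPow_zpow_delta k 1

lemma inf_le_inf_tauPow (k : ℤ) (x : G) : S.inf x ≤ S.inf (S.tauPow k x) :=
  S.inf_max _ _ <| by
    simpa only [le, tauPow_zpow_delta] using (S.tauPow_le_tauPow_iff k).2 (S.inf_le x)

lemma inf_tauPow (k : ℤ) (x : G) : S.inf (S.tauPow k x) = S.inf x := by
  refine _root_.le_antisymm ?_ (S.inf_le_inf_tauPow k x)
  simpa only [tauPow_neg_tauPow] using S.inf_le_inf_tauPow (-k) (S.tauPow k x)

lemma sup_tauPow_le_sup (k : ℤ) (x : G) : S.sup (S.tauPow k x) ≤ S.sup x :=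
  S.sup_min _ _ <| by
    simpa only [le, tauPow_zpow_delta] using (S.tauPow_le_tauPow_iff k).2 (S.le_sup x)

lemma sup_tauPow (k : ℤ) (x : G) : S.sup (S.tauPow k x) = S.sup x := by
  refine _root_.le_antisymm (S.sup_tauPow_le_sup k x) ?_
  simpa only [tauPow_neg_tauPow] using S.sup_tauPow_le_sup (-k) (S.tauPow k x)

lemma inf_inv (x : G) : S.inf x⁻¹ = -S.sup x := by
  refine _root_.le_antisymm ?_ ?_
  · have := S.sup_min x (-S.inf x⁻¹) <| S.mem_P_of_eq (by rw [tauPow_apply]; group)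
      (S.tauPow_mem_P (-S.inf x⁻¹) (S.inf_le x⁻¹))
    omega
  · exact S.inf_max _ _ <| S.mem_P_of_eq (by rw [tauPow_apply]; group)
      (S.tauPow_mem_P (-S.sup x) (S.le_sup x))

lemma iota_tauPow (k : ℤ) (x : G) : S.iota (S.tauPow k x) = S.tauPow k (S.iota x) := by
  rw [iota, iota, inf_tauPow, tauPow_wedge, map_mul, tauPow_zpow_delta, tauPow_delta]

lemma pp_tauPow (k : ℤ) (x : G) : S.pp (S.tauPow k x) = S.tauPow k (S.pp x) := by
  rw [pp, pp, ← map_inv, iota_tauPow, iota_tauPow, tauPow_wedge]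

lemma iota_le_mul_iota_conj {x γ : G} (hγ : γ ∈ S.P) (h : S.inf (γ⁻¹ * x * γ) = S.inf x) :
    S.le (S.iota x) (γ * S.iota (γ⁻¹ * x * γ)) := by
  rw [iota, iota, h, mul_wedge]
  refine S.le_wedge _ _ _ (S.le_trans (S.wedge_le_left _ _) ?_)
    (S.le_trans (S.wedge_le_right _ _) ?_)
  · exact S.mem_P_of_eq (by rw [tauPow_apply]; group) (S.tauPow_mem_P (-S.inf x) hγ)
  · exact S.mem_P_of_eq (by rw [tauPow_apply]; group) (S.tauPow_mem_P 1 hγ)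

lemma pp_le_mul_pp_conj {x γ : G} (hγ : γ ∈ S.P) (h1 : S.inf (γ⁻¹ * x * γ) = S.inf x)
    (h2 : S.sup (γ⁻¹ * x * γ) = S.sup x) : S.le (S.pp x) (γ * S.pp (γ⁻¹ * x * γ)) := by
  have hinv : (γ⁻¹ * x * γ)⁻¹ = γ⁻¹ * x⁻¹ * γ := by group
  rw [pp, pp, mul_wedge, hinv]
  refine S.wedge_mono (S.iota_le_mul_iota_conj hγ h1) (S.iota_le_mul_iota_conj hγ ?_)
  rw [← hinv, inf_inv, inf_inv, h2]

lemma transport_mem_P {x γ : G} (hγ : γ ∈ S.P) (h1 : S.inf (γ⁻¹ * x * γ) = S.inf x)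
    (h2 : S.sup (γ⁻¹ * x * γ) = S.sup x) : S.transport x γ ∈ S.P := by
  rw [transport, mul_assoc]
  exact S.pp_le_mul_pp_conj hγ h1 h2

lemma transport_mul (x α β : G) :
    S.transport x (α * β) = S.transport x α * S.transport (α⁻¹ * x * α) β := by
  rw [transport, transport, transport, show (α * β)⁻¹ * x * (α * β) =
    β⁻¹ * (α⁻¹ * x * α) * β by group]
  group

lemma transport_zpow_delta (x : G) (k : ℤ) : S.transport x (S.Δ ^ k) = S.Δ ^ k := by
  rw [transport, ← tauPow_apply, pp_tauPow, tauPow_apply]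
  group

lemma zpow_delta_le_transport {x α : G} {k : ℤ} (hk : S.le (S.Δ ^ k) α)
    (h1 : S.inf (α⁻¹ * x * α) = S.inf x) (h2 : S.sup (α⁻¹ * x * α) = S.sup x) :
    S.le (S.Δ ^ k) (S.transport x α) := by
  have hconj : ((S.Δ ^ k)⁻¹ * α)⁻¹ * S.tauPow k x * ((S.Δ ^ k)⁻¹ * α) = α⁻¹ * x * α := by
    rw [tauPow_apply]; group
  have hα : S.transport x α = S.Δ ^ k * S.transport (S.tauPow k x) ((S.Δ ^ k)⁻¹ * α) := by
    conv_lhs => rw [← mul_inv_cancel_left (S.Δ ^ k) α]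
    rw [transport_mul, transport_zpow_delta, tauPow_apply]
  rw [le, hα, inv_mul_cancel_left]
  exact S.transport_mem_P hk (by rw [hconj, h1, inf_tauPow]) (by rw [hconj, h2, sup_tauPow])

lemma transport_le_zpow_delta {x α : G} {k : ℤ} (hk : S.le α (S.Δ ^ k))
    (h1 : S.inf (α⁻¹ * x * α) = S.inf x) (h2 : S.sup (α⁻¹ * x * α) = S.sup x) :
    S.le (S.transport x α) (S.Δ ^ k) := by
  have hconj : (α⁻¹ * S.Δ ^ k)⁻¹ * (α⁻¹ * x * α) * (α⁻¹ * S.Δ ^ k) = S.tauPow k x := by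
    rw [tauPow_apply]; group
  have hΔ : S.Δ ^ k = S.transport x α * S.transport (α⁻¹ * x * α) (α⁻¹ * S.Δ ^ k) := by
    rw [← transport_mul, mul_inv_cancel_left, transport_zpow_delta]
  rw [le, hΔ, inv_mul_cancel_left]
  exact S.transport_mem_P hk (by rw [hconj, inf_tauPow, h1]) (by rw [hconj, sup_tauPow, h2])

end Garside

open Garside in
theorem statement10 {G : Type*} [Group G] (S : Garside G) (x α : G)
    (h1 : S.inf (α⁻¹ * x * α) = S.inf x) (h2 : S.sup (α⁻¹ * x * α) = S.sup x) :
    S.inf α ≤ S.inf (S.transport x α) ∧ S.sup (S.transport x α) ≤ S.sup α ∧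
      S.len (S.transport x α) ≤ S.len α ∧
      (S.le 1 α ∧ S.le α S.Δ →
        S.le 1 (S.transport x α) ∧ S.le (S.transport x α) S.Δ) := by
  have hinf := S.inf_max _ _ (S.zpow_delta_le_transport (S.inf_le α) h1 h2)
  have hsup := S.sup_min _ _ (S.transport_le_zpow_delta (S.le_sup α) h1 h2)
  refine ⟨hinf, hsup, by unfold len; omega, fun hα => ?_⟩
  rw [one_le_and_le_delta_iff] at hα ⊢
  omega

end GarsidePaper
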